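/- For a, p, q > 0, ∫₀^∞ ((1 + a/(qx))^{qx} - (1 + a/(px))^{px})/x dx = (e^a - 1) · ln(q/p). -/

import Mathlib

/-!
Put `f t = (1 + a / t) ^ t = exp (t * log (1 + a / t))`. The integral is Frullani's integral for
`f`, which tends to `1` at `0⁺` and to `exp a` at `∞`, so it equals `log (q / p) * (exp a - 1)`
as soon as the integrand is integrable. Integrability follows from power rates of convergence,
`|f t - 1| ≤ C √t` and `|f t - exp a| ≤ C / t`, which come from
`u / (1 + u) ≤ log (1 + u) ≤ min u (2 √u)` and the Lipschitz bound of `exp` on `(-∞, a]`.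
-/

open MeasureTheory Real Set Filter Topology

namespace Frullani

variable {E : Type*} [NormedAddCommGroup E] {f : ℝ → E}

lemma tendsto_nhdsGT_zero_of_norm_sub_le {L : E} {C α : ℝ} (hα : 0 < α)
    (hf : ∀ t > 0, ‖f t - L‖ ≤ C * t ^ α) : Tendsto f (𝓝[>] 0) (𝓝 L) := by
  have hpow : Tendsto (fun t : ℝ ↦ C * t ^ α) (𝓝[>] 0) (𝓝 0) := by
    have hcont : ContinuousAt (fun t : ℝ ↦ t ^ α) 0 := continuousAt_id.rpow_const (Or.inr hα.le)
    simpa [zero_rpow hα.ne'] using (hcont.tendsto.mono_left nhdsWithin_le_nhds).const_mul C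
  exact tendsto_iff_norm_sub_tendsto_zero.2 <| squeeze_zero' (.of_forall fun _ ↦ norm_nonneg _)
    (eventually_nhdsWithin_of_forall hf) hpow

lemma tendsto_atTop_of_norm_sub_le {R : E} {D β : ℝ} (hβ : 0 < β)
    (hf : ∀ t > 0, ‖f t - R‖ ≤ D * t ^ (-β)) : Tendsto f atTop (𝓝 R) := by
  have hpow : Tendsto (fun t : ℝ ↦ D * t ^ (-β)) atTop (𝓝 0) := by
    simpa using (tendsto_rpow_neg_atTop hβ).const_mul D
  exact tendsto_iff_norm_sub_tendsto_zero.2 <| squeeze_zero' (.of_forall fun _ ↦ norm_nonneg _)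
    ((eventually_gt_atTop 0).mono hf) hpow

variable [NormedSpace ℝ E] {a b : ℝ}

lemma norm_inv_smul_sub_le {L : E} {C γ : ℝ} (ha : 0 < a) (hb : 0 < b)
    (hf : ∀ t > 0, ‖f t - L‖ ≤ C * t ^ γ) {x : ℝ} (hx : 0 < x) :
    ‖x⁻¹ • (f (a * x) - f (b * x))‖ ≤ C * (a ^ γ + b ^ γ) * x ^ (γ - 1) := by
  have hdiff : ‖f (a * x) - f (b * x)‖ ≤ C * (a ^ γ + b ^ γ) * x ^ γ :=
    calc ‖f (a * x) - f (b * x)‖ = ‖(f (a * x) - L) - (f (b * x) - L)‖ := by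
          rw [sub_sub_sub_cancel_right]
      _ ≤ ‖f (a * x) - L‖ + ‖f (b * x) - L‖ := norm_sub_le _ _
      _ ≤ C * (a * x) ^ γ + C * (b * x) ^ γ :=
          add_le_add (hf _ (mul_pos ha hx)) (hf _ (mul_pos hb hx))
      _ = C * (a ^ γ + b ^ γ) * x ^ γ := by
          rw [mul_rpow ha.le hx.le, mul_rpow hb.le hx.le]; ring
  rw [norm_smul, norm_inv, Real.norm_of_nonneg hx.le, rpow_sub_one hx.ne', inv_mul_le_iff₀ hx]
  calc ‖f (a * x) - f (b * x)‖ ≤ C * (a ^ γ + b ^ γ) * x ^ γ := hdiff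
    _ = x * (C * (a ^ γ + b ^ γ) * (x ^ γ / x)) := by field_simp

lemma integrableOn_inv_smul_sub {L : E} {C γ : ℝ} {s : Set ℝ} (hf : ContinuousOn f (Ioi 0))
    (ha : 0 < a) (hb : 0 < b) (hs : MeasurableSet s) (hs₀ : s ⊆ Ioi 0)
    (hγ : IntegrableOn (fun x : ℝ ↦ x ^ (γ - 1)) s) (hfL : ∀ t > 0, ‖f t - L‖ ≤ C * t ^ γ) :
    IntegrableOn (fun x ↦ x⁻¹ • (f (a * x) - f (b * x))) s := by
  have hcont : ContinuousOn (fun x ↦ x⁻¹ • (f (a * x) - f (b * x))) (Ioi 0) := by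
    refine (continuousOn_inv₀.mono fun x hx ↦ ne_of_gt hx).smul
      ((hf.comp (by fun_prop) fun x hx ↦ ?_).sub (hf.comp (by fun_prop) fun x hx ↦ ?_))
    exacts [mul_pos ha hx, mul_pos hb hx]
  refine (hγ.const_mul (C * (a ^ γ + b ^ γ))).mono' ((hcont.mono hs₀).aestronglyMeasurable hs) ?_
  filter_upwards [ae_restrict_mem hs] with x hx
  exact norm_inv_smul_sub_le ha hb hfL (hs₀ hx)

theorem integral_Ioi_eq_of_norm_sub_le [CompleteSpace E] {L R : E} {C D α β : ℝ}
    (hf : ContinuousOn f (Ioi 0)) (ha : 0 < a) (hb : 0 < b) (hα : 0 < α) (hβ : 0 < β)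
    (hL : ∀ t > 0, ‖f t - L‖ ≤ C * t ^ α) (hR : ∀ t > 0, ‖f t - R‖ ≤ D * t ^ (-β)) :
    ∫ x in Ioi 0, x⁻¹ • (f (a * x) - f (b * x)) = log (b / a) • (L - R) := by
  have hnear : IntegrableOn (fun x ↦ x⁻¹ • (f (a * x) - f (b * x))) (Ioc 0 1) := by
    refine integrableOn_inv_smul_sub hf ha hb measurableSet_Ioc Ioc_subset_Ioi_self ?_ hL
    rw [← intervalIntegrable_iff_integrableOn_Ioc_of_le zero_le_one]
    exact intervalIntegral.intervalIntegrable_rpow' (by linarith)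
  have hfar : IntegrableOn (fun x ↦ x⁻¹ • (f (a * x) - f (b * x))) (Ioi 1) :=
    integrableOn_inv_smul_sub hf ha hb measurableSet_Ioi (Ioi_subset_Ioi zero_le_one)
      (integrableOn_Ioi_rpow_of_lt (by linarith) one_pos) hR
  refine integral_Ioi_eq (hf.locallyIntegrableOn measurableSet_Ioi) ha hb
    (tendsto_nhdsGT_zero_of_norm_sub_le hα hL) (tendsto_atTop_of_norm_sub_le hβ hR) ?_
  rw [← Ioc_union_Ioi_eq_Ioi zero_le_one]
  exact hnear.union hfar

end Frullani

lemma Real.abs_exp_sub_exp_le {u v M : ℝ} (hu : u ≤ M) (hv : v ≤ M) :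
    |exp u - exp v| ≤ exp M * |u - v| := by
  wlog hvu : v ≤ u generalizing u v
  · rw [abs_sub_comm, abs_sub_comm u]
    exact this hv hu (le_of_not_ge hvu)
  have hexp : exp u - exp v ≤ exp u * (u - v) := by
    have hstep := add_one_le_exp (v - u)
    rw [exp_sub] at hstep
    calc exp u - exp v = exp u * (1 - exp v / exp u) := by field_simp
      _ ≤ exp u * (u - v) := mul_le_mul_of_nonneg_left (by linarith) (exp_pos u).le
  rw [abs_of_nonneg (sub_nonneg.2 (exp_le_exp.2 hvu)), abs_of_nonneg (sub_nonneg.2 hvu)]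
  exact hexp.trans (by gcongr)

lemma Real.log_one_add_le_two_sqrt {u : ℝ} (hu : 0 ≤ u) : log (1 + u) ≤ 2 * √u := by
  calc log (1 + u) ≤ log ((1 + √u) ^ 2) := by
        gcongr
        nlinarith [sq_sqrt hu, sqrt_nonneg u]
    _ = 2 * log (1 + √u) := by rw [log_pow]; norm_num
    _ ≤ 2 * √u := by
        have := log_le_sub_one_of_pos (by positivity : 0 < 1 + √u)
        linarith

section CompoundInterest

variable {a t : ℝ}

lemma one_add_div_rpow_eq_exp (ha : 0 ≤ a) (ht : 0 < t) :
    (1 + a / t) ^ t = exp (t * log (1 + a / t)) := by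
  rw [rpow_def_of_pos (by positivity), mul_comm]

lemma mul_log_one_add_div_nonneg (ha : 0 ≤ a) (ht : 0 < t) : 0 ≤ t * log (1 + a / t) :=
  mul_nonneg ht.le (log_nonneg (by simp only [le_add_iff_nonneg_right]; positivity))

lemma mul_log_one_add_div_le (ha : 0 ≤ a) (ht : 0 < t) : t * log (1 + a / t) ≤ a := by
  have := log_le_sub_one_of_pos (by positivity : 0 < 1 + a / t)
  calc t * log (1 + a / t) ≤ t * (a / t) := by gcongr; linarith
    _ = a := by field_simp

lemma mul_log_one_add_div_le_two_sqrt (ha : 0 ≤ a) (ht : 0 < t) :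
    t * log (1 + a / t) ≤ 2 * √a * √t := by
  calc t * log (1 + a / t) ≤ t * (2 * √(a / t)) := by
        gcongr; exact log_one_add_le_two_sqrt (by positivity)
    _ = 2 * √a * (t / √t) := by rw [sqrt_div' _ ht.le]; ring
    _ = 2 * √a * √t := by rw [div_sqrt]

lemma sub_sq_div_le_mul_log_one_add_div (ha : 0 ≤ a) (ht : 0 < t) :
    a - a ^ 2 / t ≤ t * log (1 + a / t) := by
  have hlog := one_sub_inv_le_log_of_pos (by positivity : 0 < 1 + a / t)
  calc a - a ^ 2 / t ≤ a - a ^ 2 / (t + a) := by gcongr; linarith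
    _ = t * (1 - (1 + a / t)⁻¹) := by field_simp; ring
    _ ≤ t * log (1 + a / t) := by gcongr

lemma abs_one_add_div_rpow_sub_one_le (ha : 0 ≤ a) (ht : 0 < t) :
    |(1 + a / t) ^ t - 1| ≤ 2 * exp a * √a * √t := by
  have hφ := mul_log_one_add_div_nonneg ha ht
  calc |(1 + a / t) ^ t - 1| = |exp (t * log (1 + a / t)) - exp 0| := by
        rw [one_add_div_rpow_eq_exp ha ht, exp_zero]
    _ ≤ exp a * |t * log (1 + a / t) - 0| := abs_exp_sub_exp_le (mul_log_one_add_div_le ha ht) ha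
    _ ≤ exp a * (2 * √a * √t) := by
        rw [sub_zero, abs_of_nonneg hφ]
        exact mul_le_mul_of_nonneg_left (mul_log_one_add_div_le_two_sqrt ha ht) (exp_pos a).le
    _ = 2 * exp a * √a * √t := by ring

lemma abs_one_add_div_rpow_sub_exp_le (ha : 0 ≤ a) (ht : 0 < t) :
    |(1 + a / t) ^ t - exp a| ≤ exp a * a ^ 2 * t⁻¹ := by
  have hφ := mul_log_one_add_div_le ha ht
  calc |(1 + a / t) ^ t - exp a| = |exp (t * log (1 + a / t)) - exp a| := by
        rw [one_add_div_rpow_eq_exp ha ht]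
    _ ≤ exp a * |t * log (1 + a / t) - a| := abs_exp_sub_exp_le hφ le_rfl
    _ ≤ exp a * (a ^ 2 / t) := by
        rw [abs_of_nonpos (sub_nonpos.2 hφ)]; gcongr
        linarith [sub_sq_div_le_mul_log_one_add_div ha ht]
    _ = exp a * a ^ 2 * t⁻¹ := by ring

lemma continuousOn_one_add_div_rpow (ha : 0 ≤ a) :
    ContinuousOn (fun t : ℝ ↦ (1 + a / t) ^ t) (Ioi 0) :=
  ContinuousOn.rpow (continuousOn_const.add (continuousOn_const.div continuousOn_id
    fun _ ht ↦ ne_of_gt ht)) continuousOn_id fun t (ht : 0 < t) ↦ Or.inl (by positivity)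

end CompoundInterest

theorem frullani_compound (a p q : ℝ) (ha : 0 < a) (hp : 0 < p) (hq : 0 < q) :
    ∫ x in Ioi (0:ℝ),
      ((1 + a / (q * x)) ^ (q * x) - (1 + a / (p * x)) ^ (p * x)) / x
      = (Real.exp a - 1) * Real.log (q / p) := by
  have hL : ∀ t > 0, ‖(1 + a / t) ^ t - 1‖ ≤ 2 * exp a * √a * t ^ (1 / 2 : ℝ) := fun t ht ↦ by
    rw [norm_eq_abs, ← sqrt_eq_rpow]
    exact abs_one_add_div_rpow_sub_one_le ha.le ht
  have hR : ∀ t > 0, ‖(1 + a / t) ^ t - exp a‖ ≤ exp a * a ^ 2 * t ^ (-1 : ℝ) := fun t ht ↦ by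
    rw [norm_eq_abs, rpow_neg_one]
    exact abs_one_add_div_rpow_sub_exp_le ha.le ht
  have h := Frullani.integral_Ioi_eq_of_norm_sub_le (continuousOn_one_add_div_rpow ha.le) hq hp
    one_half_pos one_pos hL hR
  simp only [smul_eq_mul, inv_mul_eq_div] at h
  rw [h, log_div hp.ne' hq.ne', log_div hq.ne' hp.ne']
  ring
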